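/- arXiv:1412.6160 — 4 statements merged into one kernel-verified Lean document; each statement's English description precedes it below -/
import Mathlib

section
/- Let F, G be complex matrices of the same size with FF* = GG*. Then there exists a unitary matrix U such that F = GU. -/
open Matrix

/-! Since `‖Fᴴ x‖² = ⟪x, F Fᴴ x⟫`, the hypothesis says that `‖Fᴴ x‖ = ‖Gᴴ x‖` for every `x`. So
`Gᴴ x ↦ Fᴴ x` is a well-defined isometry on the range of `Gᴴ`, which extends to a linear isometry
`W` of the whole space; its matrix `A` is unitary with `A Gᴴ = Fᴴ`, and `U = Aᴴ`. -/

theorem LinearMap.exists_linearIsometryEquiv_comp_eq_of_norm_eq {𝕜 E F : Type*} [RCLike 𝕜]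
    [AddCommGroup E] [Module 𝕜 E] [NormedAddCommGroup F] [InnerProductSpace 𝕜 F]
    [FiniteDimensional 𝕜 F] (f g : E →ₗ[𝕜] F) (h : ∀ x, ‖f x‖ = ‖g x‖) :
    ∃ W : F ≃ₗᵢ[𝕜] F, W.toLinearMap ∘ₗ g = f := by
  have hker : ker g ≤ ker f := fun x hx => by
    rwa [mem_ker, ← norm_eq_zero, h, norm_eq_zero]
  let L₀ : range g →ₗ[𝕜] F := (ker g).liftQ f hker ∘ₗ g.quotKerEquivRange.symm.toLinearMap
  have hL₀ : ∀ x, L₀ ⟨g x, mem_range_self g x⟩ = f x := fun x => by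
    simp [L₀, quotKerEquivRange_symm_apply_image]
  let L : range g →ₗᵢ[𝕜] F :=
    ⟨L₀, by rintro ⟨_, x, rfl⟩; exact congrArg norm (hL₀ x) |>.trans (h x)⟩
  refine ⟨L.extend.toLinearIsometryEquiv rfl, LinearMap.ext fun x => ?_⟩
  exact (L.extend_apply ⟨g x, mem_range_self g x⟩).trans (hL₀ x)

namespace Matrix

variable {𝕜 m n : Type*} [RCLike 𝕜] [Fintype m] [DecidableEq m] [Fintype n] [DecidableEq n]

theorem inner_toEuclideanLin_conjTranspose_self (M : Matrix m n 𝕜) (x : EuclideanSpace 𝕜 m) :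
    inner 𝕜 (toEuclideanLin Mᴴ x) (toEuclideanLin Mᴴ x) =
      inner 𝕜 x (toEuclideanLin (M * Mᴴ) x) := by
  rw [toLpLin_mul_same, LinearMap.comp_apply, toEuclideanLin_conjTranspose_eq_adjoint,
    LinearMap.adjoint_inner_left]

theorem norm_toEuclideanLin_conjTranspose_eq {M N : Matrix m n 𝕜} (h : M * Mᴴ = N * Nᴴ)
    (x : EuclideanSpace 𝕜 m) : ‖toEuclideanLin Mᴴ x‖ = ‖toEuclideanLin Nᴴ x‖ := by
  rw [@norm_eq_sqrt_re_inner 𝕜, @norm_eq_sqrt_re_inner 𝕜,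
    inner_toEuclideanLin_conjTranspose_self, inner_toEuclideanLin_conjTranspose_self, h]

theorem toEuclideanLin_symm_mem_unitaryGroup
    (W : EuclideanSpace 𝕜 n ≃ₗᵢ[𝕜] EuclideanSpace 𝕜 n) :
    toEuclideanLin.symm W.toLinearMap ∈ unitaryGroup n 𝕜 := by
  rw [toEuclideanLin_eq_toLin_orthonormal, toLin_symm]
  exact W.toMatrix_mem_unitaryGroup (EuclideanSpace.basisFun n 𝕜) (EuclideanSpace.basisFun n 𝕜)

end Matrix

/-- If `F Fᴴ = G Gᴴ` then there is a unitary `U` with `F = G * U`. -/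
theorem exists_unitary_of_mul_conjTranspose_eq
    (p q : ℕ) (F G : Matrix (Fin p) (Fin q) ℂ)
    (h : F * Fᴴ = G * Gᴴ) :
    ∃ U : Matrix (Fin q) (Fin q) ℂ,
      U ∈ Matrix.unitaryGroup (Fin q) ℂ ∧ F = G * U := by
  obtain ⟨W, hW⟩ := LinearMap.exists_linearIsometryEquiv_comp_eq_of_norm_eq _ _
    (norm_toEuclideanLin_conjTranspose_eq h)
  set A := toEuclideanLin.symm W.toLinearMap
  have hAG : A * Gᴴ = Fᴴ := toEuclideanLin.injective <| by
    rwa [toLpLin_mul_same, LinearEquiv.apply_symm_apply]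
  refine ⟨Aᴴ, Unitary.star_mem (toEuclideanLin_symm_mem_unitaryGroup W), ?_⟩
  rw [← conjTranspose_conjTranspose F, ← hAG, conjTranspose_mul, conjTranspose_conjTranspose]
end

section
/- Let V ∈ ℂ^{(n+m)×(n+m)} be positive semidefinite and satisfy [I_n 0] V [I_n 0]* = [A B] V [A B]* for given A ∈ ℂ^{n×n}, B ∈ ℂ^{n×m}. Then there exist finitely many positive semidefinite rank-one matrices V_k with V = Σ_k V_k and [I_n 0] V_k [I_n 0]* = [A B] V_k [A B]* for each k. -/
/-!
Write `V = X Xᴴ`. The constraint says `P Pᴴ = Q Qᴴ` for `P = [I 0] X` and `Q = [A B] X`, so the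
adjoints `Pᴴ` and `Qᴴ` have equal norms pointwise and `Q = P U` for a unitary `U`. A unitary is
normal, so diagonalising its commuting self-adjoint real and imaginary parts simultaneously gives
an orthonormal eigenbasis `(s i)` of `U`, with unimodular eigenvalues `ω i`. Then
`V = ∑ (X s i) (X s i)ᴴ`, and each term satisfies the constraint because `Q s i = ω i • P s i`.
-/

open LinearMap Matrix Module
open scoped ComplexOrder MatrixOrder

section RCLike

variable {𝕜 E F : Type*} [RCLike 𝕜] [NormedAddCommGroup E] [InnerProductSpace 𝕜 E]
  [FiniteDimensional 𝕜 E]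

theorem exists_linearIsometryEquiv_comp_eq [AddCommGroup F] [Module 𝕜 F] (f g : F →ₗ[𝕜] E)
    (h : ∀ v, ‖f v‖ = ‖g v‖) : ∃ U : E ≃ₗᵢ[𝕜] E, U.toLinearMap ∘ₗ f = g := by
  obtain ⟨s, hs⟩ := f.rangeRestrict.exists_rightInverse_of_surjective (range_rangeRestrict f)
  have hfs : ∀ x, f (s x) = x := fun x => congrArg Subtype.val (LinearMap.congr_fun hs x)
  let L : range f →ₗᵢ[𝕜] E := ⟨g ∘ₗ s, fun x => by simp [← h, hfs]⟩
  refine ⟨L.extend.toLinearIsometryEquiv rfl, LinearMap.ext fun v => ?_⟩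
  have hfv : f (s ⟨f v, mem_range_self f v⟩ - v) = 0 := by rw [map_sub, hfs, sub_self]
  rw [← norm_eq_zero, h, map_sub, norm_eq_zero, sub_eq_zero] at hfv
  exact (L.extend_apply _).trans hfv

theorem LinearIsometryEquiv.isStarNormal_toLinearMap (U : E ≃ₗᵢ[𝕜] E) :
    IsStarNormal U.toLinearMap := by
  rw [isStarNormal_iff, star_eq_adjoint, U.adjoint_toLinearMap_eq_symm, Commute, SemiconjBy]
  ext v
  simp

variable [NormedAddCommGroup F] [InnerProductSpace 𝕜 F] [FiniteDimensional 𝕜 F]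

theorem norm_adjoint_apply_eq_of_comp_adjoint_eq {p q : E →ₗ[𝕜] F}
    (h : p ∘ₗ adjoint p = q ∘ₗ adjoint q) (v : F) : ‖adjoint p v‖ = ‖adjoint q v‖ := by
  have hv : p (adjoint p v) = q (adjoint q v) := LinearMap.congr_fun h v
  rw [@norm_eq_sqrt_re_inner 𝕜, @norm_eq_sqrt_re_inner 𝕜, adjoint_inner_left, adjoint_inner_left,
    hv]

theorem exists_linearIsometryEquiv_eq_comp_of_comp_adjoint_eq {p q : E →ₗ[𝕜] F}
    (h : p ∘ₗ adjoint p = q ∘ₗ adjoint q) : ∃ U : E ≃ₗᵢ[𝕜] E, q = p ∘ₗ U.toLinearMap := by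
  obtain ⟨U, hU⟩ :=
    exists_linearIsometryEquiv_comp_eq _ _ (norm_adjoint_apply_eq_of_comp_adjoint_eq h)
  refine ⟨U.symm, ?_⟩
  rw [← adjoint_adjoint q, ← hU, adjoint_comp, adjoint_adjoint, U.adjoint_toLinearMap_eq_symm]

end RCLike

section Complex

variable {E F : Type*} [NormedAddCommGroup E] [InnerProductSpace ℂ E] [FiniteDimensional ℂ E]

theorem exists_orthonormalBasis_eigenvectors_of_isStarNormal (T : E →ₗ[ℂ] E) [IsStarNormal T] :
    ∃ b : OrthonormalBasis (Fin (finrank ℂ E)) ℂ E, ∀ i, ∃ μ : ℂ, T (b i) = μ • b i := by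
  classical
  set A : E →ₗ[ℂ] E := (realPart T : E →ₗ[ℂ] E)
  set B : E →ₗ[ℂ] E := (imaginaryPart T : E →ₗ[ℂ] E)
  have hA : A.IsSymmetric := (isSymmetric_iff_isSelfAdjoint _).mpr (realPart T).2
  have hB : B.IsSymmetric := (isSymmetric_iff_isSelfAdjoint _).mpr (imaginaryPart T).2
  set W : ℂ × ℂ → Submodule ℂ E := fun μ => End.eigenspace A μ.2 ⊓ End.eigenspace B μ.1
  have hW : DirectSum.IsInternal W :=
    hA.directSum_isInternal_of_commute hB (Commute.realPart_imaginaryPart T)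
  -- `subordinateOrthonormalBasis` needs a finite index type: keep the nonzero `W μ` only.
  let := hW.submodule_iSupIndep.fintypeNeBotOfFiniteDimensional
  have hV := DirectSum.isInternal_ne_bot_iff.mpr hW
  have hV' := (hA.orthogonalFamily_eigenspace_inf_eigenspace hB).comp
    (Subtype.val_injective (p := fun μ => W μ ≠ ⊥))
  refine ⟨hV.subordinateOrthonormalBasis rfl hV', fun i => ?_⟩
  obtain ⟨hAi, hBi⟩ := Submodule.mem_inf.mp (hV.subordinateOrthonormalBasis_subordinate rfl i hV')
  set μ := (hV.subordinateOrthonormalBasisIndex rfl i hV').1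
  refine ⟨μ.2 + Complex.I * μ.1, ?_⟩
  conv_lhs => rw [← realPart_add_I_smul_imaginaryPart T]
  rw [LinearMap.add_apply, LinearMap.smul_apply, End.mem_eigenspace_iff.mp hAi,
    End.mem_eigenspace_iff.mp hBi, smul_smul, add_smul]

variable [NormedAddCommGroup F] [InnerProductSpace ℂ F] [FiniteDimensional ℂ F]

theorem exists_orthonormalBasis_apply_eq_smul_of_comp_adjoint_eq {p q : E →ₗ[ℂ] F}
    (h : p ∘ₗ adjoint p = q ∘ₗ adjoint q) :
    ∃ (b : OrthonormalBasis (Fin (finrank ℂ E)) ℂ E) (ω : Fin (finrank ℂ E) → ℂ),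
      ∀ i, ‖ω i‖ = 1 ∧ q (b i) = ω i • p (b i) := by
  obtain ⟨U, rfl⟩ := exists_linearIsometryEquiv_eq_comp_of_comp_adjoint_eq h
  have := U.isStarNormal_toLinearMap
  obtain ⟨b, hb⟩ := exists_orthonormalBasis_eigenvectors_of_isStarNormal U.toLinearMap
  choose ω hω using hb
  have hUb (i) : U (b i) = ω i • b i := hω i
  refine ⟨b, ω, fun i => ⟨?_, ?_⟩⟩
  · simpa [hUb, norm_smul] using U.norm_map (b i)
  · rw [LinearMap.comp_apply, hω i, map_smul]

end Complex

namespace Matrix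

theorem rank_pos_of_ne_zero {K m n : Type*} [Field K] [Fintype m] [Fintype n] {M : Matrix m n K}
    (h : M ≠ 0) : 0 < M.rank := by
  classical
  rw [rank, finrank_pos_iff, Submodule.nontrivial_iff_ne_bot, ne_eq, range_eq_bot]
  exact fun h0 => h (toLin'.injective (by rw [map_zero]; exact h0))

theorem rank_vecMulVec_of_ne_zero {K m n : Type*} [Field K] [Fintype m] [Fintype n]
    {w : m → K} {v : n → K} (h : vecMulVec w v ≠ 0) : (vecMulVec w v).rank = 1 :=
  le_antisymm (rank_vecMulVec_le w v) (rank_pos_of_ne_zero h)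

variable {𝕜 ι κ : Type*} [RCLike 𝕜]

theorem vecMulVec_smul_self_star {ω : 𝕜} (hω : ‖ω‖ = 1) (v : ι → 𝕜) :
    vecMulVec (ω • v) (star (ω • v)) = vecMulVec v (star v) := by
  ext i j
  simp only [vecMulVec_apply, Pi.smul_apply, Pi.star_apply, smul_eq_mul, star_mul',
    RCLike.star_def]
  have hωω : ω * starRingEnd 𝕜 ω = 1 := by simp [RCLike.mul_conj, hω]
  linear_combination v i * starRingEnd 𝕜 (v j) * hωω

variable [Fintype ι]

theorem mul_vecMulVec_self_star_mul_conjTranspose (M : Matrix κ ι 𝕜) (v : ι → 𝕜) :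
    M * vecMulVec v (star v) * Mᴴ = vecMulVec (M *ᵥ v) (star (M *ᵥ v)) := by
  rw [mul_vecMulVec, vecMulVec_mul, star_mulVec]

theorem _root_.OrthonormalBasis.sum_vecMulVec_self_star [DecidableEq ι] [Fintype κ]
    (b : OrthonormalBasis κ 𝕜 (EuclideanSpace 𝕜 ι)) :
    ∑ i, vecMulVec (b i).ofLp (star (b i).ofLp) = 1 := by
  have := congrArg (toEuclideanLin (𝕜 := 𝕜) (m := ι) (n := ι)).symm
    (congrArg ContinuousLinearMap.toLinearMap b.sum_rankOne_eq_id)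
  simpa [ContinuousLinearMap.toLinearMap_sum, InnerProductSpace.symm_toEuclideanLin_rankOne]
    using this

variable [Fintype κ] [DecidableEq ι] [DecidableEq κ]

theorem exists_sum_vecMulVec_eq_one_and_mulVec_eq_smul {P Q : Matrix κ ι ℂ}
    (h : P * Pᴴ = Q * Qᴴ) :
    ∃ (d : ℕ) (u : Fin d → ι → ℂ) (ω : Fin d → ℂ), ∑ i, vecMulVec (u i) (star (u i)) = 1 ∧
      ∀ i, ‖ω i‖ = 1 ∧ Q *ᵥ u i = ω i • (P *ᵥ u i) := by
  have hlin : toEuclideanLin P ∘ₗ adjoint (toEuclideanLin P) =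
      toEuclideanLin Q ∘ₗ adjoint (toEuclideanLin Q) := by
    simp only [← toEuclideanLin_conjTranspose_eq_adjoint, ← toLpLin_mul_same, h]
  obtain ⟨b, ω, hω⟩ := exists_orthonormalBasis_apply_eq_smul_of_comp_adjoint_eq hlin
  exact ⟨_, fun i => (b i).ofLp, ω, b.sum_vecMulVec_self_star,
    fun i => ⟨(hω i).1, congrArg WithLp.ofLp (hω i).2⟩⟩

theorem PosSemidef.exists_sum_vecMulVec_and_mulVec_eq_smul {V : Matrix ι ι ℂ} (hV : V.PosSemidef)
    {C D : Matrix κ ι ℂ} (h : C * V * Cᴴ = D * V * Dᴴ) :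
    ∃ (d : ℕ) (y : Fin d → ι → ℂ) (ω : Fin d → ℂ), V = ∑ i, vecMulVec (y i) (star (y i)) ∧
      ∀ i, ‖ω i‖ = 1 ∧ D *ᵥ y i = ω i • (C *ᵥ y i) := by
  obtain ⟨B, rfl⟩ := CStarAlgebra.nonneg_iff_eq_star_mul_self.mp hV.nonneg
  have hB : (C * Bᴴ) * (C * Bᴴ)ᴴ = (D * Bᴴ) * (D * Bᴴ)ᴴ := by
    simpa only [conjTranspose_mul, conjTranspose_conjTranspose, star_eq_conjTranspose,
      Matrix.mul_assoc] using h
  obtain ⟨d, u, ω, hu, hω⟩ := exists_sum_vecMulVec_eq_one_and_mulVec_eq_smul hB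
  refine ⟨d, fun i => Bᴴ *ᵥ u i, ω, ?_, fun i => ⟨(hω i).1, ?_⟩⟩
  · simp only [← mul_vecMulVec_self_star_mul_conjTranspose, ← Finset.sum_mul, ← Finset.mul_sum,
      hu, Matrix.mul_one, conjTranspose_conjTranspose, star_eq_conjTranspose]
  · simp only [mulVec_mulVec, (hω i).2]

end Matrix

theorem exists_fin_subfamily_ne_zero_sum_eq {ι M : Type*} [Fintype ι] [AddCommMonoid M]
    (f : ι → M) : ∃ (K : ℕ) (e : Fin K → ι), (∀ k, f (e k) ≠ 0) ∧ ∑ k, f (e k) = ∑ i, f i := by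
  classical
  set s := Finset.univ.filter (f · ≠ 0)
  refine ⟨s.card, fun k => s.equivFin.symm k,
    fun k => (Finset.mem_filter.mp (s.equivFin.symm k).2).2, ?_⟩
  rw [Equiv.sum_comp s.equivFin.symm (fun i => f i), Finset.sum_coe_sort, Finset.sum_filter_ne_zero]

/-- Rank one decomposition: a PSD matrix `V` satisfying
`[I 0] V [I 0]ᴴ = [A B] V [A B]ᴴ` decomposes as a finite sum of rank-one PSD
matrices each satisfying the same constraint. -/
theorem rank_one_decomposition
    (n m : ℕ) (A : Matrix (Fin n) (Fin n) ℂ) (B : Matrix (Fin n) (Fin m) ℂ)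
    (V : Matrix (Fin n ⊕ Fin m) (Fin n ⊕ Fin m) ℂ)
    (hV : V.PosSemidef)
    (hconstr : (Matrix.fromCols (1 : Matrix (Fin n) (Fin n) ℂ) (0 : Matrix (Fin n) (Fin m) ℂ)) * V *
        (Matrix.fromCols (1 : Matrix (Fin n) (Fin n) ℂ) (0 : Matrix (Fin n) (Fin m) ℂ))ᴴ =
      (Matrix.fromCols A B) * V * (Matrix.fromCols A B)ᴴ) :
    ∃ (K : ℕ) (Vk : Fin K → Matrix (Fin n ⊕ Fin m) (Fin n ⊕ Fin m) ℂ),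
      V = ∑ k, Vk k ∧
      ∀ k, (Vk k).PosSemidef ∧ (Vk k).rank = 1 ∧
        (Matrix.fromCols (1 : Matrix (Fin n) (Fin n) ℂ) (0 : Matrix (Fin n) (Fin m) ℂ)) * Vk k *
            (Matrix.fromCols (1 : Matrix (Fin n) (Fin n) ℂ) (0 : Matrix (Fin n) (Fin m) ℂ))ᴴ =
          (Matrix.fromCols A B) * Vk k * (Matrix.fromCols A B)ᴴ := by
  obtain ⟨d, y, ω, hVy, hy⟩ := hV.exists_sum_vecMulVec_and_mulVec_eq_smul hconstr
  obtain ⟨K, e, hne, hsum⟩ :=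
    exists_fin_subfamily_ne_zero_sum_eq fun i => vecMulVec (y i) (star (y i))
  refine ⟨K, fun k => vecMulVec (y (e k)) (star (y (e k))), hVy.trans hsum.symm, fun k =>
    ⟨posSemidef_vecMulVec_self_star _, rank_vecMulVec_of_ne_zero (hne k), ?_⟩⟩
  rw [mul_vecMulVec_self_star_mul_conjTranspose, mul_vecMulVec_self_star_mul_conjTranspose,
    (hy _).2, vecMulVec_smul_self_star (hy _).1]
end

section
/- Let V ⪰ 0 satisfy [I_n 0] V [I_n 0]* = [A B] V [A B]* and Tr([0 I_m] V [0 I_m]*) ≤ 1, where A is Schur stable. If additionally V is rank one, written V = [x; w][x; w]*, then ‖w‖² ≤ 1 and there is θ ∈ ℝ with e^{iθ} x = A x + B w, hence x = (e^{iθ} I − A)^{−1} B w. -/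
/-!
Congruence by a matrix `M` maps the rank-one matrix `u uᴴ` to `(M u)(M u)ᴴ`. The power constraint
is therefore `‖w‖² ≤ 1`, and the Lyapunov-type constraint reads `x xᴴ = y yᴴ` with `y = A x + B w`;
two vectors with the same rank-one Gram matrix differ by a phase, so `y = e^{iθ} x`. As `A` has
no eigenvalue on the unit circle, `e^{iθ} I - A` is invertible.
-/

open Matrix
open scoped ComplexOrder

namespace Matrix

variable {l m n : Type*} [Fintype m]

theorem mul_vecMulVec_star_mul_conjTranspose {α : Type*} [CommSemiring α] [StarRing α]
    (M : Matrix l m α) (u : m → α) :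
    M * vecMulVec u (star u) * Mᴴ = vecMulVec (M *ᵥ u) (star (M *ᵥ u)) := by
  rw [mul_vecMulVec, vecMulVec_mul, star_mulVec]

theorem re_trace_vecMulVec_star (w : m → ℂ) :
    (vecMulVec w (star w)).trace.re = ∑ i, ‖w i‖ ^ 2 := by
  simp [trace_vecMulVec, dotProduct, Complex.mul_conj', ← Complex.ofReal_pow]

theorem exists_exp_smul_eq_of_vecMulVec_star_eq {a b : n → ℂ}
    (h : vecMulVec a (star a) = vecMulVec b (star b)) :
    ∃ θ : ℝ, Complex.exp (θ * Complex.I) • a = b := by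
  have hab (i j : n) : a i * star (a j) = b i * star (b j) := by
    simpa only [vecMulVec_apply, Pi.star_apply] using congrFun (congrFun h i) j
  by_cases ha : a = 0
  · refine ⟨0, ?_⟩
    have : b = 0 := by
      ext j
      simpa [ha, Complex.mul_conj, eq_comm (a := (0 : ℂ))] using hab j j
    simp [ha, this]
  obtain ⟨i, hi⟩ : ∃ i, a i ≠ 0 := Function.ne_iff.mp ha
  have hnorm : ‖b i‖ = ‖a i‖ := by
    have := hab i i
    simp only [Complex.star_def, Complex.mul_conj, Complex.normSq_eq_norm_sq] at this
    exact (sq_eq_sq₀ (norm_nonneg _) (norm_nonneg _)).mp (by exact_mod_cast this.symm)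
  obtain ⟨θ, hθ⟩ := (Complex.norm_eq_one_iff (b i / a i)).mp (by
    rw [norm_div, hnorm, div_self (norm_ne_zero_iff.mpr hi)])
  refine ⟨θ, funext fun j => ?_⟩
  -- multiply `a j * conj (a i) = b j * conj (b i)` by `b i` and use `‖b i‖ = ‖a i‖`
  have hji : b i * a j = b j * a i := by
    have hconj : star (a i) ≠ 0 := by simpa using hi
    apply mul_right_cancel₀ hconj
    have h1 := congrArg (· * b i) (hab j i)
    have h2 : star (b i) * b i = a i * star (a i) := by
      simp only [Complex.star_def, mul_comm, Complex.mul_conj, Complex.normSq_eq_norm_sq, hnorm]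
    linear_combination h1 + b j * h2
  rw [Pi.smul_apply, smul_eq_mul, hθ]
  field_simp
  linear_combination hji

theorem eq_inv_sub_mulVec_of_smul_eq {K : Type*} [Field K] [Fintype n] [DecidableEq n]
    {A : Matrix n n K} {μ : K} (hμ : μ ∉ spectrum K A) {x y : n → K}
    (h : μ • x = A *ᵥ x + y) : x = (μ • 1 - A)⁻¹ *ᵥ y := by
  have hunit : IsUnit (μ • 1 - A) := by
    simpa [Algebra.algebraMap_eq_smul_one] using spectrum.notMem_iff.mp hμ
  have hy : y = (μ • 1 - A) *ᵥ x := by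
    rw [sub_mulVec, smul_mulVec, one_mulVec, h]; abel
  rw [hy, mulVec_mulVec, nonsing_inv_mul _ ((isUnit_iff_isUnit_det _).mp hunit), one_mulVec]

end Matrix

theorem rank_one_feasible_structure_general
    (n m : ℕ) (A : Matrix (Fin n) (Fin n) ℂ) (B : Matrix (Fin n) (Fin m) ℂ)
    (hA : ∀ μ ∈ spectrum ℂ A, ‖μ‖ < 1)
    (x : Fin n → ℂ) (w : Fin m → ℂ)
    (V : Matrix (Fin n ⊕ Fin m) (Fin n ⊕ Fin m) ℂ)
    (hVeq : V = Matrix.vecMulVec (Sum.elim x w) (star (Sum.elim x w)))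
    (hconstr : (Matrix.fromCols (1 : Matrix (Fin n) (Fin n) ℂ) (0 : Matrix (Fin n) (Fin m) ℂ)) * V *
        (Matrix.fromCols (1 : Matrix (Fin n) (Fin n) ℂ) (0 : Matrix (Fin n) (Fin m) ℂ))ᴴ =
      (Matrix.fromCols A B) * V * (Matrix.fromCols A B)ᴴ)
    (hpow : ((Matrix.fromCols (0 : Matrix (Fin m) (Fin n) ℂ) (1 : Matrix (Fin m) (Fin m) ℂ)) * V *
        (Matrix.fromCols (0 : Matrix (Fin m) (Fin n) ℂ) (1 : Matrix (Fin m) (Fin m) ℂ))ᴴ).trace.re ≤ 1) :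
    (∑ i, ‖w i‖ ^ 2 ≤ 1) ∧
    ∃ θ : ℝ, Complex.exp (θ * Complex.I) • x = A *ᵥ x + B *ᵥ w ∧
      x = (Complex.exp (θ * Complex.I) • (1 : Matrix (Fin n) (Fin n) ℂ) - A)⁻¹ *ᵥ (B *ᵥ w) := by
  subst hVeq
  simp only [mul_vecMulVec_star_mul_conjTranspose, fromCols_mulVec_sumElim, one_mulVec,
    zero_mulVec, add_zero, zero_add] at hconstr hpow
  refine ⟨re_trace_vecMulVec_star w ▸ hpow, ?_⟩
  obtain ⟨θ, hθ⟩ := exists_exp_smul_eq_of_vecMulVec_star_eq hconstr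
  have hθA : Complex.exp (θ * Complex.I) ∉ spectrum ℂ A := fun hmem =>
    (hA _ hmem).ne (Complex.norm_exp_ofReal_mul_I θ)
  exact ⟨θ, hθ, eq_inv_sub_mulVec_of_smul_eq hθA hθ⟩

/-- A rank-one feasible point `V = [x; w][x; w]ᴴ` of the SDP satisfies
`‖w‖² ≤ 1` and `e^{iθ} x = Ax + Bw` for some real `θ`, hence
`x = (e^{iθ} I − A)⁻¹ B w`. -/
theorem rank_one_feasible_structure
    (n m : ℕ) (A : Matrix (Fin n) (Fin n) ℂ) (B : Matrix (Fin n) (Fin m) ℂ)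
    (hA : ∀ μ ∈ spectrum ℂ A, ‖μ‖ < 1)
    (x : Fin n → ℂ) (w : Fin m → ℂ)
    (V : Matrix (Fin n ⊕ Fin m) (Fin n ⊕ Fin m) ℂ)
    (hVeq : V = Matrix.vecMulVec (Sum.elim x w) (star (Sum.elim x w)))
    (hV : V.PosSemidef)
    (hconstr : (Matrix.fromCols (1 : Matrix (Fin n) (Fin n) ℂ) (0 : Matrix (Fin n) (Fin m) ℂ)) * V *
        (Matrix.fromCols (1 : Matrix (Fin n) (Fin n) ℂ) (0 : Matrix (Fin n) (Fin m) ℂ))ᴴ =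
      (Matrix.fromCols A B) * V * (Matrix.fromCols A B)ᴴ)
    (hpow : ((Matrix.fromCols (0 : Matrix (Fin m) (Fin n) ℂ) (1 : Matrix (Fin m) (Fin m) ℂ)) * V *
        (Matrix.fromCols (0 : Matrix (Fin m) (Fin n) ℂ) (1 : Matrix (Fin m) (Fin m) ℂ))ᴴ).trace.re ≤ 1) :
    (∑ i, ‖w i‖ ^ 2 ≤ 1) ∧
    ∃ θ : ℝ, Complex.exp (θ * Complex.I) • x = A *ᵥ x + B *ᵥ w ∧
      x = (Complex.exp (θ * Complex.I) • (1 : Matrix (Fin n) (Fin n) ℂ) - A)⁻¹ *ᵥ (B *ᵥ w) :=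
  rank_one_feasible_structure_general n m A B hA x w V hVeq hconstr hpow
end

section
/- For the scalar system (A,B,C,D)=(0,0,1,1), the dual problem minimize λ over λ ≥ 0 and real P subject to the 2×2 matrix [[−P + 1, 1],[1, 1 − λ]] ⪯ 0 has infimum 1, but no feasible point (P, λ) attains λ = 1. -/
/-!
A real symmetric `2 × 2` matrix is positive semidefinite iff its diagonal entries and its
determinant are nonnegative. For the negated LMI this reads `P ≥ 1`, `λ ≥ 1` and
`(P - 1)(λ - 1) ≥ 1`, so the feasible values of `λ` are exactly `(1, ∞)`: every `λ > 1` is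
reached with `P = 1 + 1/(λ - 1)`, while `λ = 1` would need `0 ≥ 1`.
-/

open Matrix

theorem Matrix.posSemidef_fin_two_iff {a b c : ℝ} :
    (!![a, b; b, c]).PosSemidef ↔ 0 ≤ a ∧ 0 ≤ c ∧ b ^ 2 ≤ a * c := by
  constructor
  · intro h
    have hdet := h.det_nonneg
    rw [det_fin_two_of] at hdet
    exact ⟨by simpa using h.diag_nonneg (i := 0), by simpa using h.diag_nonneg (i := 1),
      by nlinarith⟩
  · rintro ⟨ha, hc, hb⟩
    refine .of_dotProduct_mulVec_nonneg ?_ fun x => ?_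
    · ext i j
      fin_cases i <;> fin_cases j <;> rfl
    · simp only [star_trivial, dotProduct, mulVec, Fin.sum_univ_two, of_apply, cons_val',
        cons_val_zero, cons_val_one, empty_val', cons_val_fin_one]
      -- `a · q(x) = (a x₀ + b x₁)² + (a c - b²) x₁²`, and `a = 0` forces `b = 0`
      rcases ha.eq_or_lt with rfl | ha
      · have hb : b = 0 := by nlinarith
        subst hb
        nlinarith [sq_nonneg (x 1)]
      · refine nonneg_of_mul_nonneg_right ?_ ha
        nlinarith [sq_nonneg (a * x 0 + b * x 1), sq_nonneg (x 1)]

theorem scalarDual_posSemidef_iff {P l : ℝ} :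
    (-(Matrix.of ![![-P + 1, 1], ![1, 1 - l]] : Matrix (Fin 2) (Fin 2) ℝ)).PosSemidef ↔
      1 ≤ P ∧ 1 ≤ l ∧ 1 ≤ (P - 1) * (l - 1) := by
  have hneg : -(Matrix.of ![![-P + 1, 1], ![1, 1 - l]] : Matrix (Fin 2) (Fin 2) ℝ) =
      !![P - 1, -1; -1, l - 1] := by
    ext i j
    fin_cases i <;> fin_cases j <;> simp [neg_add_eq_sub]
  rw [hneg, posSemidef_fin_two_iff, sub_nonneg, sub_nonneg, neg_one_sq]

theorem scalarDual_feasibleSet_eq_Ioi :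
    {l : ℝ | ∃ P : ℝ, 0 ≤ l ∧
        (-(Matrix.of ![![-P + 1, 1], ![1, 1 - l]] : Matrix (Fin 2) (Fin 2) ℝ)).PosSemidef} =
      Set.Ioi 1 := by
  ext l
  simp only [Set.mem_ofPred_eq, Set.mem_Ioi, scalarDual_posSemidef_iff]
  constructor
  · rintro ⟨P, -, -, hl, hprod⟩
    refine hl.lt_of_ne fun h => ?_
    rw [← h, sub_self, mul_zero] at hprod
    linarith
  · intro hl
    have hl' : 0 < l - 1 := sub_pos.mpr hl
    refine ⟨1 + 1 / (l - 1), by linarith, by simp [hl'.le], hl.le, ?_⟩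
    rw [add_sub_cancel_left, one_div_mul_cancel hl'.ne']

/-- For the scalar system `(A,B,C,D) = (0,0,1,1)`, the dual KYP problem
`min λ` over `λ ≥ 0`, `P ∈ ℝ` with `[[−P+1, 1],[1, 1−λ]] ⪯ 0`
(stated as `−[[−P+1,1],[1,1−λ]] ⪰ 0`) has infimum `1`, but no feasible point
attains `λ = 1`. -/
theorem scalar_example_dual_no_attainment :
    IsGLB {l : ℝ | ∃ P : ℝ, 0 ≤ l ∧
        (-(Matrix.of ![![-P + 1, 1], ![1, 1 - l]] : Matrix (Fin 2) (Fin 2) ℝ)).PosSemidef} 1 ∧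
    ¬ ∃ P : ℝ, 0 ≤ (1 : ℝ) ∧
        (-(Matrix.of ![![-P + 1, 1], ![1, 1 - (1 : ℝ)]] : Matrix (Fin 2) (Fin 2) ℝ)).PosSemidef := by
  have hfeas := scalarDual_feasibleSet_eq_Ioi
  refine ⟨hfeas ▸ isGLB_Ioi, fun hattained => ?_⟩
  have h : (1 : ℝ) ∈ Set.Ioi 1 := hfeas ▸ hattained
  exact Set.self_notMem_Ioi h
end
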